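/- arXiv:2404.02816 — 4 statements merged into one kernel-verified Lean document; each statement's English description precedes it below -/
import Mathlib

section
/- Consider a codistribution P and an involutive distribution D with D⌟P = 0 on an n-dimensional manifold, and let P̂ be the smallest codistribution containing P which is invariant with respect to D. Then, after performing a coordinate transformation x̄ = Φ(x) such that D = span{∂_{x̄¹},…,∂_{x̄^d}}, the codistribution P̂ possesses a basis of 1-forms of the form ω = a_i(x̄^{d+1},…,x̄ⁿ) dx̄^i with i ranging over d+1,…,n, i.e., a basis which contains none of the differentials dx̄¹,…,dx̄^d and whose coefficients are independent of the coordinates x̄¹,…,x̄^d. -/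
/-!
The closure `P̂` lies in the annihilator of `D = span {∂₁, …, ∂_d}`: `P` does, and that
annihilator is itself `D`-invariant. So a basis of `P̂` contains no `dx̄¹, …, dx̄ᵈ`.

Invariance of `P̂` says that the derivatives `∂ᵢ` (`i ≤ d`) of a basis of `P̂` stay pointwise in
its span. A differentiable frame `Φ t` whose derivative stays in its own span spans a constant
subspace: near `t₀` take a left inverse `L` of `Φ t₀`; the renormalised frame
`h t = Φ t ∘ (L ∘ Φ t)⁻¹` spans the same subspace and satisfies `L ∘ h = 1`, so `L ∘ h' = 0`,
while `h' t` lies in the span of `Φ t`, on which `L` is injective; thus `h' = 0`. Hence the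
pointwise span of `P̂` depends only on `x̄^{d+1}, …, x̄ⁿ`, and composing the basis with the
projection that zeroes `x̄¹, …, x̄ᵈ` gives the required basis.
-/

noncomputable section
open Function Filter Topology

/-- Points of the `N`-dimensional manifold (global coordinates). -/
abbrev Pt (N : ℕ) := Fin N → ℝ
/-- The ring of real-valued functions on the manifold (smooth functions live here). -/
abbrev FF (N : ℕ) := Pt N → ℝ
/-- Coefficient functions of vector fields `v = vⁱ∂_{xⁱ}` and of 1-forms `ω = ω_i dxⁱ`,
regarded as a module over the function ring `FF N`. -/
abbrev VF (N : ℕ) := Pt N → Pt N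

/-- Contraction (interior product) `v⌟ω = vⁱω_i` of a vector field with a 1-form. -/
def contr {N : ℕ} (v ω : VF N) : FF N := fun z => ∑ i, v z i * ω z i

/-- Lie derivative of the 1-form `ω` along the vector field `v` (in coordinates):
`(L_v ω)_i = vᵏ ∂_{xᵏ}ω_i + ω_k ∂_{xⁱ}vᵏ`. -/
def lieD {N : ℕ} (v ω : VF N) : VF N :=
  fun z i => fderiv ℝ (fun y => ω y i) z (v z)
    + ∑ k, ω z k * fderiv ℝ (fun y => v y k) z (Pi.single i 1)

/-- The contraction `v⌟dω` of a vector field with the exterior derivative of a 1-form: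
`(v⌟dω)_i = vᵏ(∂_{xᵏ}ω_i − ∂_{xⁱ}ω_k)`. -/
def intD {N : ℕ} (v ω : VF N) : VF N :=
  fun z i => ∑ k, v z k *
    (fderiv ℝ (fun y => ω y i) z (Pi.single k 1) - fderiv ℝ (fun y => ω y k) z (Pi.single i 1))

/-- Lie bracket `[v,w]` of two vector fields (in coordinates). -/
def lieB {N : ℕ} (v w : VF N) : VF N :=
  fun z i => fderiv ℝ (fun y => w y i) z (v z) - fderiv ℝ (fun y => v y i) z (w z)

/-- `P` is a `p`-dimensional codistribution: it is spanned (over the function ring) by `p`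
smooth, pointwise linearly independent 1-forms. -/
def CodistOfDim {N : ℕ} (P : Submodule (FF N) (VF N)) (p : ℕ) : Prop :=
  ∃ ω : Fin p → VF N, (∀ j, ContDiff ℝ (⊤ : ℕ∞) (ω j)) ∧
    (∀ z, LinearIndependent ℝ (fun j => ω j z)) ∧
    P = Submodule.span (FF N) (Set.range ω)

/-- `P` is a codistribution (of locally — here globally — constant dimension). -/
def IsCodist {N : ℕ} (P : Submodule (FF N) (VF N)) : Prop := ∃ p, CodistOfDim P p

/-- Invariance of the codistribution `P` w.r.t. the distribution spanned by the vector
fields `v i`: `L_{v i} ω ∈ P` for all `ω ∈ P`. -/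
def InvariantUnder {N d : ℕ} (v : Fin d → VF N) (P : Submodule (FF N) (VF N)) : Prop :=
  ∀ i, ∀ ω ∈ P, lieD (v i) ω ∈ P

/-- The smallest submodule containing `P` which is invariant w.r.t. the distribution
spanned by the `v i`. -/
def invClosure {N d : ℕ} (v : Fin d → VF N) (P : Submodule (FF N) (VF N)) :
    Submodule (FF N) (VF N) :=
  sInf {Q | P ≤ Q ∧ InvariantUnder v Q}

open Set

namespace ContinuousLinearMap

variable {V E : Type*} [NormedAddCommGroup V] [NormedSpace ℝ V]
  [NormedAddCommGroup E] [NormedSpace ℝ E]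

theorem range_comp_ringInverse (Φ : V →L[ℝ] E) {A : V →L[ℝ] V} (hA : IsUnit A) :
    range (Φ.comp (Ring.inverse A)) = range Φ := by
  obtain ⟨A, rfl⟩ := hA
  rw [Ring.inverse_unit, coe_comp]
  exact (ContinuousLinearEquiv.unitsEquiv ℝ V A⁻¹).surjective.range_comp _

theorem eq_zero_of_range_subset_of_comp_eq_zero {Φ T : V →L[ℝ] E} {L : E →L[ℝ] V}
    (hL : IsUnit (L.comp Φ)) (hT : range T ⊆ range Φ) (hLT : L.comp T = 0) : T = 0 := by
  obtain ⟨A, hA⟩ := hL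
  ext x
  obtain ⟨w, hw⟩ := hT ⟨x, rfl⟩
  have hw0 : ContinuousLinearEquiv.unitsEquiv ℝ V A w = 0 := by
    rw [ContinuousLinearEquiv.unitsEquiv_apply, hA, comp_apply, hw, ← comp_apply, hLT,
      zero_apply]
  rw [map_eq_zero_iff _ (ContinuousLinearEquiv.injective _)] at hw0
  rw [← hw, hw0, map_zero, zero_apply]

variable [CompleteSpace V]

theorem hasDerivAt_comp_ringInverse_eq_zero (L : E →L[ℝ] V) {Φ : ℝ → V →L[ℝ] E}
    (hΦ : Differentiable ℝ Φ) {t : ℝ} (ht : IsUnit (L.comp (Φ t)))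
    (hder : range ⇑(deriv Φ t) ⊆ range (Φ t)) :
    HasDerivAt (fun s => (Φ s).comp (Ring.inverse (L.comp (Φ s)))) 0 t := by
  set M : ℝ → V →L[ℝ] V := fun s => L.comp (Φ s)
  have hM : Differentiable ℝ M := fun s => (differentiableAt_const L).clm_comp (hΦ s)
  have hh := (hΦ t).hasDerivAt.clm_comp ((hM t).inverse ht).hasDerivAt
  convert hh using 1
  refine (eq_zero_of_range_subset_of_comp_eq_zero ht ?_ ?_).symm
  · rintro _ ⟨x, rfl⟩
    obtain ⟨w, hw⟩ := hder ⟨Ring.inverse (M t) x, rfl⟩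
    exact ⟨w + deriv (fun s => Ring.inverse (M s)) t x, by simp [hw]⟩
  · have hunit : ∀ᶠ s in 𝓝 t, IsUnit (M s) :=
      hM.continuous.continuousAt (Units.isOpen.mem_nhds ht)
    have hconst : HasDerivAt (fun s => L.comp ((Φ s).comp (Ring.inverse (M s)))) 0 t :=
      (hasDerivAt_const t 1).congr_of_eventuallyEq <| hunit.mono fun s hs => by
        simp only [← comp_assoc]
        exact Ring.mul_inverse_cancel _ hs
    simpa using ((hasDerivAt_const t L).clm_comp hh).unique hconst

variable [FiniteDimensional ℝ E]

theorem eventually_range_eq_of_range_deriv_subset {Φ : ℝ → V →L[ℝ] E}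
    (hΦ : Differentiable ℝ Φ) (hinj : ∀ t, Injective (Φ t))
    (hder : ∀ t, range ⇑(deriv Φ t) ⊆ range (Φ t)) (t₀ : ℝ) :
    ∀ᶠ t in 𝓝 t₀, range (Φ t) = range (Φ t₀) := by
  obtain ⟨L, hL⟩ := (Φ t₀ : V →ₗ[ℝ] E).exists_leftInverse_of_injective
    (LinearMap.ker_eq_bot.2 (hinj t₀))
  set M : ℝ → V →L[ℝ] V := fun t => (LinearMap.toContinuousLinearMap L).comp (Φ t)
  have hU : IsOpen {t | IsUnit (M t)} :=
    (continuous_const.clm_comp hΦ.continuous : Continuous M).isOpen_preimage _ Units.isOpen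
  have hM₀ : M t₀ = 1 := by ext x; exact congr($hL x)
  obtain ⟨ε, hε, hball⟩ := Metric.isOpen_iff.1 hU t₀ (by simp [hM₀])
  have hconst : ∀ t ∈ Metric.ball t₀ ε,
      (Φ t).comp (Ring.inverse (M t)) = (Φ t₀).comp (Ring.inverse (M t₀)) := fun t ht =>
    Metric.isOpen_ball.is_const_of_deriv_eq_zero (convex_ball t₀ ε).isPreconnected
      (fun s hs => (hasDerivAt_comp_ringInverse_eq_zero _ hΦ (hball hs) (hder s))
        |>.differentiableAt.differentiableWithinAt)
      (fun s hs => (hasDerivAt_comp_ringInverse_eq_zero _ hΦ (hball hs) (hder s)).deriv)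
      ht (Metric.mem_ball_self hε)
  filter_upwards [Metric.ball_mem_nhds t₀ hε] with t ht
  rw [← range_comp_ringInverse (Φ t) (hball ht),
    ← range_comp_ringInverse (Φ t₀) (hball (Metric.mem_ball_self hε)), hconst t ht]

theorem range_eq_of_range_deriv_subset {Φ : ℝ → V →L[ℝ] E}
    (hΦ : Differentiable ℝ Φ) (hinj : ∀ t, Injective (Φ t))
    (hder : ∀ t, range ⇑(deriv Φ t) ⊆ range (Φ t)) (s t : ℝ) :
    range (Φ s) = range (Φ t) :=
  (IsLocallyConstant.iff_eventually_eq _).2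
    (eventually_range_eq_of_range_deriv_subset hΦ hinj hder) |>.apply_eq_of_preconnectedSpace s t

end ContinuousLinearMap

section Frame

variable {ι E : Type*} [Fintype ι] [DecidableEq ι]
  [NormedAddCommGroup E] [NormedSpace ℝ E] [FiniteDimensional ℝ E]

variable (ι E) in
/-- A family `f : ι → E` as the operator `c ↦ ∑ i, c i • f i`. -/
def frameEquiv : (ι → E) ≃L[ℝ] ((ι → ℝ) →L[ℝ] E) :=
  ((LinearEquiv.piRing ℝ E ι ℝ).symm.trans
    LinearMap.toContinuousLinearMap).toContinuousLinearEquiv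

theorem coe_frameEquiv (f : ι → E) : ⇑(frameEquiv ι E f) = Fintype.linearCombination ℝ f :=
  funext (LinearEquiv.piRing_symm_apply ℝ f)

theorem range_frameEquiv (f : ι → E) :
    range (frameEquiv ι E f) = Submodule.span ℝ (range f) := by
  rw [coe_frameEquiv, ← Fintype.range_linearCombination, LinearMap.coe_range]

theorem LinearIndependent.injective_frameEquiv {f : ι → E} (hf : LinearIndependent ℝ f) :
    Injective (frameEquiv ι E f) := by
  rwa [coe_frameEquiv, ← linearIndependent_iff_injective_fintypeLinearCombination]

theorem span_range_eq_of_deriv_mem {F : ℝ → ι → E} (hF : Differentiable ℝ F)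
    (hli : ∀ t, LinearIndependent ℝ (F t))
    (hder : ∀ t i, deriv F t i ∈ Submodule.span ℝ (range (F t))) (s t : ℝ) :
    Submodule.span ℝ (range (F s)) = Submodule.span ℝ (range (F t)) := by
  have hΦ : ∀ t, HasDerivAt (fun t => frameEquiv ι E (F t)) (frameEquiv ι E (deriv F t)) t :=
    fun t => (frameEquiv ι E).hasFDerivAt.comp_hasDerivAt t (hF t).hasDerivAt
  refine SetLike.coe_injective ?_
  rw [← range_frameEquiv, ← range_frameEquiv]
  refine ContinuousLinearMap.range_eq_of_range_deriv_subset (fun t => (hΦ t).differentiableAt)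
    (fun t => (hli t).injective_frameEquiv) (fun t => ?_) s t
  rw [(hΦ t).deriv, range_frameEquiv, range_frameEquiv]
  exact Submodule.span_le.2 (range_subset_iff.2 (hder t))

theorem span_range_add_eq_of_fderiv_mem {X : Type*} [NormedAddCommGroup X] [NormedSpace ℝ X]
    {b : ι → X → E} (hb : ∀ i, Differentiable ℝ (b i))
    (hli : ∀ x, LinearIndependent ℝ fun i => b i x) {u : X}
    (hu : ∀ x i, fderiv ℝ (b i) x u ∈ Submodule.span ℝ (range fun j => b j x)) (x : X) :
    Submodule.span ℝ (range fun i => b i (x + u)) = Submodule.span ℝ (range fun i => b i x) := by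
  have hF : ∀ t, HasDerivAt (fun t i => b i (x + t • u))
      (fun i => fderiv ℝ (b i) (x + t • u) u) t := fun t => hasDerivAt_pi.2 fun i => by
    simpa [Function.comp_def] using
      (hb i _).hasFDerivAt.comp_hasDerivAt t (((hasDerivAt_id t).smul_const u).const_add x)
  simpa using span_range_eq_of_deriv_mem (fun t => (hF t).differentiableAt) (fun t => hli _)
    (fun t i => (hF t).deriv ▸ hu _ i) 1 0

end Frame

theorem Submodule.mem_span_range_pi_iff {X R M ι : Type*} [CommSemiring R] [AddCommMonoid M]
    [Module R M] [Fintype ι] {b : ι → X → M} {η : X → M} :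
    η ∈ span (X → R) (range b) ↔ ∀ x, η x ∈ span R (range fun i => b i x) := by
  simp only [mem_span_range_iff_exists_fun]
  constructor
  · rintro ⟨c, rfl⟩ x
    exact ⟨fun i => c i x, by simp⟩
  · intro h
    choose c hc using h
    exact ⟨fun i x => c x i, funext fun x => by simpa using hc x⟩

section Coordinates

variable {N : ℕ}

theorem contr_const_single (k : Fin N) (η : VF N) :
    contr (fun _ => Pi.single k 1) η = fun z => η z k := by
  funext z
  simp [contr, Pi.single_apply]

theorem lieD_const_apply (u : Pt N) (η : VF N) (z : Pt N) (k : Fin N) :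
    lieD (fun _ => u) η z k = fderiv ℝ (fun y => η y k) z u := by
  simp [lieD]

theorem lieD_const {η : VF N} (hη : Differentiable ℝ η) (u : Pt N) :
    lieD (fun _ => u) η = fun z => fderiv ℝ η z u := by
  ext z k
  rw [lieD_const_apply, fderiv_pi fun k => differentiable_pi.1 hη k z]
  rfl

/-- The annihilator of the coordinate distribution `span {∂ₖ | k ∈ K}`. -/
def coordAnnihilator (K : Set (Fin N)) : Submodule (FF N) (VF N) where
  carrier := {η | ∀ z, ∀ k ∈ K, η z k = 0}
  add_mem' h₁ h₂ z k hk := by simp [h₁ z k hk, h₂ z k hk]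
  zero_mem' _ _ _ := rfl
  smul_mem' f η h z k hk := by simp [h z k hk]

theorem invariantUnder_coordAnnihilator {d : ℕ} {v : Fin d → VF N}
    (hv : ∀ i, ∃ u, v i = fun _ => u) (K : Set (Fin N)) :
    InvariantUnder v (coordAnnihilator K) := by
  intro i η hη z k hk
  obtain ⟨u, hu⟩ := hv i
  have hηk : (fun y => η y k) = 0 := funext fun y => hη y k hk
  rw [hu, lieD_const_apply, hηk]
  simp

theorem invariantUnder_invClosure {d : ℕ} (v : Fin d → VF N) (P : Submodule (FF N) (VF N)) :
    InvariantUnder v (invClosure v P) := fun i _ hω =>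
  Submodule.mem_sInf.2 fun Q hQ => hQ.2 i _ (Submodule.mem_sInf.1 hω Q hQ)

theorem invClosure_le {d : ℕ} {v : Fin d → VF N} {P Q : Submodule (FF N) (VF N)}
    (hPQ : P ≤ Q) (hQ : InvariantUnder v Q) : invClosure v P ≤ Q := sInf_le ⟨hPQ, hQ⟩

theorem fderiv_mem_span_of_invariantUnder {q d : ℕ} {b : Fin q → VF N}
    (hb : ∀ j, Differentiable ℝ (b j)) {v : Fin d → VF N} {w : Fin d → Pt N}
    (hv : ∀ i, v i = fun _ => w i) (hinv : InvariantUnder v (Submodule.span (FF N) (range b)))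
    {u : Pt N} (hu : u ∈ Submodule.span ℝ (range w)) (x : Pt N) (j : Fin q) :
    fderiv ℝ (b j) x u ∈ Submodule.span ℝ (range fun i => b i x) := by
  suffices h : range w ⊆ (Submodule.span ℝ (range fun i => b i x)).comap
      (fderiv ℝ (b j) x : Pt N →ₗ[ℝ] Pt N) from
    Submodule.mem_comap.1 (Submodule.span_le.2 h hu)
  rintro _ ⟨i, rfl⟩
  have hbj := hinv i (b j) (Submodule.subset_span ⟨j, rfl⟩)
  rw [Submodule.mem_span_range_pi_iff, hv i, lieD_const (hb j)] at hbj
  exact hbj x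

theorem mem_span_single_castLE {d : ℕ} (hd : d ≤ N) {u : Pt N}
    (hu : ∀ k : Fin N, d ≤ (k : ℕ) → u k = 0) :
    u ∈ Submodule.span ℝ (range fun i : Fin d => (Pi.single (Fin.castLE hd i) 1 : Pt N)) := by
  rw [← Finset.univ_sum_single u]
  refine Submodule.sum_mem _ fun k _ => ?_
  rcases lt_or_ge (k : ℕ) d with hk | hk
  · rw [← mul_one (u k), ← smul_eq_mul, Pi.single_smul']
    exact Submodule.smul_mem _ _ (Submodule.subset_span ⟨⟨k, hk⟩, rfl⟩)
  · simp [hu k hk]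

end Coordinates

theorem invariant_closure_reduced_basis_general
    {N p d : ℕ} (hd : d ≤ N)
    (ω : Fin p → VF N)
    -- the straightened distribution D = span{∂_{x̄¹},…,∂_{x̄^d}}
    (v : Fin d → VF N)
    (hv : ∀ i, v i = fun _ => Pi.single (Fin.castLE hd i) 1)
    -- D⌟P = 0
    (hann : ∀ i j, contr (v i) (ω j) = 0)
    -- regularity: the smallest invariant extension is a codistribution
    (hreg : IsCodist (invClosure v (Submodule.span (FF N) (Set.range ω)))) :
    ∃ (phat : ℕ) (a : Fin phat → VF N),
      (∀ j, ContDiff ℝ (⊤ : ℕ∞) (a j)) ∧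
      (∀ z, LinearIndependent ℝ (fun j => a j z)) ∧
      invClosure v (Submodule.span (FF N) (Set.range ω))
        = Submodule.span (FF N) (Set.range a) ∧
      -- the basis contains none of dx̄¹,…,dx̄^d …
      (∀ j z (i : Fin N), (i : ℕ) < d → a j z i = 0) ∧
      -- … and its coefficients are independent of x̄¹,…,x̄^d
      (∀ j (z z' : Pt N), (∀ i : Fin N, d ≤ (i : ℕ) → z i = z' i) → a j z = a j z') := by
  obtain ⟨q, b, hb, hli, hPhat⟩ := hreg
  have hbd : ∀ j, Differentiable ℝ (b j) := fun j => (hb j).differentiable (by simp)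
  have hinv := hPhat ▸ invariantUnder_invClosure v (Submodule.span (FF N) (range ω))
  have hspan_ann : Submodule.span (FF N) (range b) ≤ coordAnnihilator {k | (k : ℕ) < d} := by
    rw [← hPhat]
    refine invClosure_le (Submodule.span_le.2 ?_)
      (invariantUnder_coordAnnihilator (fun i => ⟨_, hv i⟩) _)
    rintro _ ⟨j, rfl⟩ z k hk
    simpa [hv ⟨k, hk⟩, contr_const_single] using congr_fun (hann ⟨k, hk⟩ j) z
  set π : Pt N → Pt N := fun z k => if (k : ℕ) < d then 0 else z k
  refine ⟨q, fun j => b j ∘ π, fun j => (hb j).comp ?_, fun z => hli (π z), ?_,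
    fun j z k hk => hspan_ann (Submodule.subset_span ⟨j, rfl⟩) (π z) k hk, fun j z z' hzz' => ?_⟩
  · exact contDiff_pi.2 fun k => by by_cases hk : (k : ℕ) < d <;> simp [π, hk] <;> fun_prop
  · refine hPhat.trans (Submodule.ext fun η => ?_)
    simp only [Submodule.mem_span_range_pi_iff, comp_apply]
    refine forall_congr' fun z => ?_
    rw [← add_sub_cancel z (π z), span_range_add_eq_of_fderiv_mem hbd hli
      (fderiv_mem_span_of_invariantUnder hbd hv hinv
        (mem_span_single_castLE hd fun k hk => by simp [π, not_lt.2 hk]))]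
  · have hπ : π z = π z' := funext fun k => by
      simp only [π]
      split_ifs with hk
      · rfl
      · exact hzz' k (not_lt.1 hk)
    simp [hπ]

/-- Corollary 5 (items 1–4) of the paper, in straightened coordinates:
let `D` be the involutive distribution spanned by the first `d` coordinate vector fields
`∂_{x̄¹},…,∂_{x̄^d}` (which one can always arrange by the Frobenius theorem for an
involutive `D`), let `P = span{ω¹,…,ωᵖ}` be a codistribution with `D⌟P = 0`, and let
`P̂` be the smallest codistribution containing `P` which is invariant w.r.t. `D`. Then `P̂`
possesses a basis of 1-forms `a_i(x̄^{d+1},…,x̄ᴺ)dx̄^i`, `i = d+1,…,N`: a basis containing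
none of the differentials `dx̄¹,…,dx̄^d`, with coefficients independent of `x̄¹,…,x̄^d`. -/
theorem invariant_closure_reduced_basis
    {N p d : ℕ} (hd : d ≤ N)
    (ω : Fin p → VF N)
    (hωs : ∀ j, ContDiff ℝ (⊤ : ℕ∞) (ω j))
    (hωi : ∀ z, LinearIndependent ℝ (fun j => ω j z))
    -- the straightened distribution D = span{∂_{x̄¹},…,∂_{x̄^d}}
    (v : Fin d → VF N)
    (hv : ∀ i, v i = fun _ => Pi.single (Fin.castLE hd i) 1)
    -- D⌟P = 0
    (hann : ∀ i j, contr (v i) (ω j) = 0)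
    -- regularity: the smallest invariant extension is a codistribution
    (hreg : IsCodist (invClosure v (Submodule.span (FF N) (Set.range ω)))) :
    ∃ (phat : ℕ) (a : Fin phat → VF N),
      (∀ j, ContDiff ℝ (⊤ : ℕ∞) (a j)) ∧
      (∀ z, LinearIndependent ℝ (fun j => a j z)) ∧
      invClosure v (Submodule.span (FF N) (Set.range ω))
        = Submodule.span (FF N) (Set.range a) ∧
      -- the basis contains none of dx̄¹,…,dx̄^d …
      (∀ j z (i : Fin N), (i : ℕ) < d → a j z i = 0) ∧
      -- … and its coefficients are independent of x̄¹,…,x̄^d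
      (∀ j (z z' : Pt N), (∀ i : Fin N, d ≤ (i : ℕ) → z i = z' i) → a j z = a j z') :=
  invariant_closure_reduced_basis_general hd ω v hv hann hreg
end
end

section
/- The discrete-time system x¹⁺ = u¹ − x², x²⁺ = x¹(u¹ − u²), x³⁺ = u² is forward-flat around the equilibrium x₀ = (1/2, 1/2, 0), u₀ = (1,0), with flat output y = (x¹ − x³, x²). Explicitly, defining y_[k] as the k-th forward shift of y along the system dynamics (so y_[1]¹ = u¹ − x² − u², y_[1]² = x¹(u¹ − u²), y_[2]¹ = u_[1]¹ − x¹(u¹ − u²) − u_[1]², y_[2]² = (u¹ − x²)(u_[1]¹ − u_[1]²)), the following identities hold for all (x,u,u_[1]) in a neighborhood of the equilibrium where the denominators are nonzero: x¹ = y_[1]²/(y_[1]¹ + y²), x² = y², x³ = −(y¹y_[1]¹ + y¹y² − y_[1]²)/(y_[1]¹ + y²), u¹ = (y_[2]¹y² + y²y_[1]² + y_[2]²)/(y_[2]¹ + y_[1]²), u² = −(y_[1]¹y_[2]¹ + y_[1]¹y_[1]² − y_[2]²)/(y_[2]¹ + y_[1]²). -/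
noncomputable section
open Function Filter Topology

variable {X U Y : Type*}

/-- Forward-shift operator on the extended state-input space `X × (ℕ → U)`:
`δ(x, (u, u_[1], u_[2], …)) = (f(x,u), (u_[1], u_[2], …))`. -/
def sysShift (f : X → U → X) : X × (ℕ → U) → X × (ℕ → U) :=
  fun p => (f p.1 (p.2 0), fun k => p.2 (k + 1))

/-- `k`-th forward shift of an output function along the system dynamics. -/
def shiftOut (f : X → U → X) (φ : X × (ℕ → U) → Y) (k : ℕ) : X × (ℕ → U) → Y :=
  fun p => φ ((sysShift f)^[k] p)

variable [NormedAddCommGroup X] [NormedSpace ℝ X] [NormedAddCommGroup U] [NormedSpace ℝ U]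
  [NormedAddCommGroup Y] [NormedSpace ℝ Y]

/-- `φ` is a flat output of the discrete-time system `x⁺ = f(x,u)` around the
equilibrium `(x₀,u₀)`: it depends (smoothly, near the equilibrium) only on
`x, u, u_[1], …, u_[q]` for some finite `q`, and all states and inputs can be expressed
locally around the equilibrium by smooth functions of `φ` and its forward shifts
up to some finite order `R`. -/
def IsFlatOutput (f : X → U → X) (x₀ : X) (u₀ : U) (φ : X × (ℕ → U) → Y) : Prop :=
  (∃ (q : ℕ) (ψ : X × (Fin (q+1) → U) → Y),
      ContDiffAt ℝ (⊤ : ℕ∞) ψ (x₀, fun _ => u₀) ∧ ∀ p, φ p = ψ (p.1, fun i => p.2 i)) ∧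
  ∃ (R : ℕ) (Fx : (Fin R → Y) → X) (Fu : (Fin (R+1) → Y) → U),
    ContDiffAt ℝ (⊤ : ℕ∞) Fx (fun j => shiftOut f φ (j : ℕ) ((x₀, fun _ => u₀) : X × (ℕ → U))) ∧
    ContDiffAt ℝ (⊤ : ℕ∞) Fu (fun j => shiftOut f φ (j : ℕ) ((x₀, fun _ => u₀) : X × (ℕ → U))) ∧
    ∀ᶠ p in nhds ((x₀, fun _ => u₀) : X × (ℕ → U)),
      p.1 = Fx (fun j => shiftOut f φ (j : ℕ) p) ∧
      p.2 0 = Fu (fun j => shiftOut f φ (j : ℕ) p)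

/-- Forward-flatness of `x⁺ = f(x,u)` around the equilibrium `(x₀,u₀)`:
existence of a flat output with `dim(y) = dim(u)` components. -/
def IsForwardFlat (f : X → U → X) (x₀ : X) (u₀ : U) : Prop :=
  ∃ φ : X × (ℕ → U) → U, IsFlatOutput f x₀ u₀ φ

/-- The rank of a continuous linear map. -/
def clmRank {E F : Type*} [NormedAddCommGroup E] [NormedSpace ℝ E]
    [NormedAddCommGroup F] [NormedSpace ℝ F] (L : E →L[ℝ] F) : ℕ :=
  Module.finrank ℝ (LinearMap.range L.toLinearMap)

/-!
The flat output and its first two shifts are `y = (x¹ − x³, x²)`,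
`y_[1] = (u¹ − x² − u², x¹(u¹ − u²))` and
`y_[2] = (u_[1]¹ − x¹(u¹ − u²) − u_[1]², (u¹ − x²)(u_[1]¹ − u_[1]²))`.
Because `y_[1]¹ + y² = u¹ − u²` and `y_[2]¹ + y_[1]² = u_[1]¹ − u_[1]²`, these equations can be
solved rationally for `x` and `u` wherever the input differences `u¹ − u²`, `u_[1]¹ − u_[1]²`
are nonzero, which is an open condition satisfied at `u₀ = (1, 0)`.
-/

section Equilibrium

variable {α β γ : Type*} {f : α → β → α} {x₀ : α} {u₀ : β}

theorem sysShift_equilibrium (h : f x₀ u₀ = x₀) :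
    sysShift f (x₀, fun _ => u₀) = (x₀, fun _ => u₀) :=
  Prod.ext h rfl

theorem shiftOut_equilibrium (h : f x₀ u₀ = x₀) (φ : α × (ℕ → β) → γ) (k : ℕ) :
    shiftOut f φ k (x₀, fun _ => u₀) = φ (x₀, fun _ => u₀) :=
  congrArg φ (iterate_fixed (sysShift_equilibrium h) k)

end Equilibrium

/-- At an equilibrium all shifts of the output coincide, hence the constant tuples at which
`Fx` and `Fu` are required to be smooth. -/
theorem isFlatOutput_of_state_output {f : X → U → X} {x₀ : X} {u₀ : U} (h : f x₀ u₀ = x₀)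
    {g : X → Y} (hg : ContDiffAt ℝ (⊤ : ℕ∞) g x₀) {R : ℕ}
    {Fx : (Fin R → Y) → X} (hFx : ContDiffAt ℝ (⊤ : ℕ∞) Fx fun _ => g x₀)
    {Fu : (Fin (R + 1) → Y) → U} (hFu : ContDiffAt ℝ (⊤ : ℕ∞) Fu fun _ => g x₀)
    (hrec : ∀ᶠ p in 𝓝 ((x₀, fun _ => u₀) : X × (ℕ → U)),
      p.1 = Fx (fun j => shiftOut f (fun p => g p.1) j p) ∧
      p.2 0 = Fu (fun j => shiftOut f (fun p => g p.1) j p)) :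
    IsFlatOutput f x₀ u₀ fun p => g p.1 := by
  simp only [IsFlatOutput, shiftOut_equilibrium h]
  exact ⟨⟨0, fun p => g p.1, hg.comp _ contDiffAt_fst, fun _ => rfl⟩, R, Fx, Fu, hFx, hFu, hrec⟩

theorem eventually_input_sub_ne_zero {α : Type*} [TopologicalSpace α] (x₀ : α)
    {u₀ : Fin 2 → ℝ} (hu₀ : u₀ 0 ≠ u₀ 1) (k : ℕ) :
    ∀ᶠ p in 𝓝 ((x₀, fun _ => u₀) : α × (ℕ → Fin 2 → ℝ)), p.2 k 0 - p.2 k 1 ≠ 0 :=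
  (by fun_prop : Continuous fun p : α × (ℕ → Fin 2 → ℝ) => p.2 k 0 - p.2 k 1).continuousAt
    |>.eventually_ne (sub_ne_zero.2 hu₀)

namespace RunningExample

def sys (x : Fin 3 → ℝ) (u : Fin 2 → ℝ) : Fin 3 → ℝ := ![u 0 - x 1, x 0 * (u 0 - u 1), u 1]

def output (x : Fin 3 → ℝ) : Fin 2 → ℝ := ![x 0 - x 2, x 1]

/-- `y j` stands for the shift `y_[j]`. -/
def stateOfOutput (y : Fin 2 → Fin 2 → ℝ) : Fin 3 → ℝ :=
  ![y 1 1 / (y 1 0 + y 0 1), y 0 1, -(y 0 0 * y 1 0 + y 0 0 * y 0 1 - y 1 1) / (y 1 0 + y 0 1)]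

def inputOfOutput (y : Fin 3 → Fin 2 → ℝ) : Fin 2 → ℝ :=
  ![(y 2 0 * y 0 1 + y 0 1 * y 1 1 + y 2 1) / (y 2 0 + y 1 1),
    -(y 1 0 * y 2 0 + y 1 0 * y 1 1 - y 2 1) / (y 2 0 + y 1 1)]

theorem sys_equilibrium : sys ![1/2, 1/2, 0] ![1, 0] = ![1/2, 1/2, 0] := by
  funext i; fin_cases i <;> norm_num [sys]

theorem contDiff_output : ContDiff ℝ (⊤ : ℕ∞) output := by
  refine contDiff_pi.2 fun i => ?_
  fin_cases i <;>
    simp only [output, Fin.zero_eta, Fin.mk_one, Matrix.cons_val_zero, Matrix.cons_val_one,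
      Matrix.cons_val_fin_one] <;>
    fun_prop

theorem contDiffAt_stateOfOutput {y : Fin 2 → Fin 2 → ℝ} (hy : y 1 0 + y 0 1 ≠ 0) :
    ContDiffAt ℝ (⊤ : ℕ∞) stateOfOutput y := by
  refine contDiffAt_pi.2 fun i => ?_
  fin_cases i <;>
    simp only [stateOfOutput, Fin.zero_eta, Fin.mk_one, Fin.reduceFinMk, Matrix.cons_val_zero,
      Matrix.cons_val_one, Matrix.cons_val] <;>
    fun_prop (disch := exact hy)

theorem contDiffAt_inputOfOutput {y : Fin 3 → Fin 2 → ℝ} (hy : y 2 0 + y 1 1 ≠ 0) :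
    ContDiffAt ℝ (⊤ : ℕ∞) inputOfOutput y := by
  refine contDiffAt_pi.2 fun i => ?_
  fin_cases i <;>
    simp only [inputOfOutput, Fin.zero_eta, Fin.mk_one, Matrix.cons_val_zero,
      Matrix.cons_val_one, Matrix.cons_val_fin_one] <;>
    fun_prop (disch := exact hy)

theorem state_parametrization (x : Fin 3 → ℝ) (u : Fin 2 → ℝ) (h : (u 0 - x 1 - u 1) + x 1 ≠ 0) :
    x 0 = (x 0 * (u 0 - u 1)) / ((u 0 - x 1 - u 1) + x 1) ∧
    x 1 = x 1 ∧
    x 2 = -((x 0 - x 2) * (u 0 - x 1 - u 1) + (x 0 - x 2) * x 1 - x 0 * (u 0 - u 1))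
            / ((u 0 - x 1 - u 1) + x 1) := by
  refine ⟨?_, rfl, ?_⟩ <;> rw [eq_div_iff h] <;> ring

theorem input_parametrization (x : Fin 3 → ℝ) (u u₁ : Fin 2 → ℝ)
    (h : (u₁ 0 - x 0 * (u 0 - u 1) - u₁ 1) + x 0 * (u 0 - u 1) ≠ 0) :
    u 0 = ((u₁ 0 - x 0 * (u 0 - u 1) - u₁ 1) * x 1 + x 1 * (x 0 * (u 0 - u 1))
            + (u 0 - x 1) * (u₁ 0 - u₁ 1))
            / ((u₁ 0 - x 0 * (u 0 - u 1) - u₁ 1) + x 0 * (u 0 - u 1)) ∧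
    u 1 = -((u 0 - x 1 - u 1) * (u₁ 0 - x 0 * (u 0 - u 1) - u₁ 1)
            + (u 0 - x 1 - u 1) * (x 0 * (u 0 - u 1)) - (u 0 - x 1) * (u₁ 0 - u₁ 1))
            / ((u₁ 0 - x 0 * (u 0 - u 1) - u₁ 1) + x 0 * (u 0 - u 1)) := by
  constructor <;> rw [eq_div_iff h] <;> ring

theorem stateOfOutput_shiftOut (p : (Fin 3 → ℝ) × (ℕ → Fin 2 → ℝ))
    (h : p.2 0 0 - p.2 0 1 ≠ 0) :
    stateOfOutput (fun j => shiftOut sys (fun p => output p.1) j p) = p.1 := by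
  obtain ⟨h0, -, h2⟩ := state_parametrization p.1 (p.2 0) (by rwa [sub_right_comm, sub_add_cancel])
  funext i
  fin_cases i
  · exact h0.symm
  · rfl
  · exact h2.symm

theorem inputOfOutput_shiftOut (p : (Fin 3 → ℝ) × (ℕ → Fin 2 → ℝ))
    (h : p.2 1 0 - p.2 1 1 ≠ 0) :
    inputOfOutput (fun j => shiftOut sys (fun p => output p.1) j p) = p.2 0 := by
  obtain ⟨h0, h1⟩ := input_parametrization p.1 (p.2 0) (p.2 1) (by rwa [sub_right_comm, sub_add_cancel])
  funext i
  fin_cases i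
  · exact h0.symm
  · exact h1.symm

theorem isFlatOutput_output : IsFlatOutput sys ![1/2, 1/2, 0] ![1, 0] fun p => output p.1 := by
  refine isFlatOutput_of_state_output sys_equilibrium contDiff_output.contDiffAt
    (contDiffAt_stateOfOutput (by norm_num [output, Matrix.cons_val_two]))
    (contDiffAt_inputOfOutput (by norm_num [output, Matrix.cons_val_two])) ?_
  filter_upwards [eventually_input_sub_ne_zero _ (by norm_num) 0,
    eventually_input_sub_ne_zero _ (by norm_num) 1] with p h₀ h₁
  exact ⟨(stateOfOutput_shiftOut p h₀).symm, (inputOfOutput_shiftOut p h₁).symm⟩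

end RunningExample

/-- Examples 1 and 2 of the paper: the discrete-time system
`x¹⁺ = u¹ − x²`, `x²⁺ = x¹(u¹ − u²)`, `x³⁺ = u²` is forward-flat around the equilibrium
`x₀ = (1/2, 1/2, 0)`, `u₀ = (1,0)`, with flat output `y = (x¹ − x³, x²)`, and the
parameterizing identities (4) of the paper hold wherever the denominators are nonzero. -/
theorem running_example_forward_flat
    (f : (Fin 3 → ℝ) → (Fin 2 → ℝ) → (Fin 3 → ℝ))
    (hf : f = fun x u => ![u 0 - x 1, x 0 * (u 0 - u 1), u 1])
    (x₀ : Fin 3 → ℝ) (hx₀ : x₀ = ![1/2, 1/2, 0])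
    (u₀ : Fin 2 → ℝ) (hu₀ : u₀ = ![1, 0])
    (φ : (Fin 3 → ℝ) × (ℕ → Fin 2 → ℝ) → Fin 2 → ℝ)
    (hφ : φ = fun p => ![p.1 0 - p.1 2, p.1 1]) :
    -- `(x₀,u₀)` is an equilibrium
    f x₀ u₀ = x₀ ∧
    -- `y = (x¹ − x³, x²)` is a flat output, so the system is forward-flat
    IsFlatOutput f x₀ u₀ φ ∧
    -- the explicit parameterization by the flat output:
    -- with y¹ = x¹ − x³, y² = x², y_[1]¹ = u¹ − x² − u², y_[1]² = x¹(u¹ − u²),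
    -- y_[2]¹ = u_[1]¹ − x¹(u¹ − u²) − u_[1]², y_[2]² = (u¹ − x²)(u_[1]¹ − u_[1]²)
    (∀ (x : Fin 3 → ℝ) (u u₁ : Fin 2 → ℝ),
      (u 0 - x 1 - u 1) + x 1 ≠ 0 →
      (u₁ 0 - x 0 * (u 0 - u 1) - u₁ 1) + x 0 * (u 0 - u 1) ≠ 0 →
      x 0 = (x 0 * (u 0 - u 1)) / ((u 0 - x 1 - u 1) + x 1) ∧
      x 1 = x 1 ∧
      x 2 = -((x 0 - x 2) * (u 0 - x 1 - u 1) + (x 0 - x 2) * x 1 - x 0 * (u 0 - u 1))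
              / ((u 0 - x 1 - u 1) + x 1) ∧
      u 0 = ((u₁ 0 - x 0 * (u 0 - u 1) - u₁ 1) * x 1 + x 1 * (x 0 * (u 0 - u 1))
              + (u 0 - x 1) * (u₁ 0 - u₁ 1))
              / ((u₁ 0 - x 0 * (u 0 - u 1) - u₁ 1) + x 0 * (u 0 - u 1)) ∧
      u 1 = -((u 0 - x 1 - u 1) * (u₁ 0 - x 0 * (u 0 - u 1) - u₁ 1)
              + (u 0 - x 1 - u 1) * (x 0 * (u 0 - u 1)) - (u 0 - x 1) * (u₁ 0 - u₁ 1))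
              / ((u₁ 0 - x 0 * (u 0 - u 1) - u₁ 1) + x 0 * (u 0 - u 1))) := by
  subst hf hx₀ hu₀ hφ
  refine ⟨RunningExample.sys_equilibrium, RunningExample.isFlatOutput_output,
    fun x u u₁ h₀ h₁ => ?_⟩
  obtain ⟨hx0, hx1, hx2⟩ := RunningExample.state_parametrization x u h₀
  obtain ⟨hu0, hu1⟩ := RunningExample.input_parametrization x u u₁ h₁
  exact ⟨hx0, hx1, hx2, hu0, hu1⟩
end
end

section
/- The discrete-time system x¹⁺ = x²(u¹+1), x²⁺ = u¹, x³⁺ = x⁴ + u² − 1, x⁴⁺ = x⁵ + 1 − x¹(u¹+1)/(x²+1), x⁵⁺ = x² + u² is forward-flat around the equilibrium x₀ = (0,0,0,1,0), u₀ = (0,0), and a flat output is given by y = (x¹/(x²+1), x³ − x⁵). -/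
/-!
Writing `y = (y¹, y²)` and using that the factor `u¹ + 1` cancels in `x¹⁺ / (x²⁺ + 1)`,
the forward shifts of the flat output are
`δy = (x², x⁴ − x² − 1)`, `δ²y = (u¹, x⁵ − x¹(u¹+1)/(x²+1) − u¹)` and
`δ³y = (u¹_[1], u² − (x²+1) u¹_[1])`, valid wherever `u¹ + 1`, `u¹_[1] + 1` and `u¹_[2] + 1`
do not vanish. This triangular system is solved successively for `x²`, `x⁴`, `u¹`,
`x¹ = y¹(x²+1)`, `x⁵`, `x³ = y² + x⁵` and `u²` by polynomial maps, which invert the shifts on the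
neighbourhood of the equilibrium where moreover `x² + 1 ≠ 0`.
Indices are 0-based in Lean: the paper's `x¹` is `x 0` and `u¹_[k]` is `p.2 k 0`.
-/

noncomputable section
open Function Filter Topology

variable {X U Y : Type*}

variable [NormedAddCommGroup X] [NormedSpace ℝ X] [NormedAddCommGroup U] [NormedSpace ℝ U]
  [NormedAddCommGroup Y] [NormedSpace ℝ Y]

theorem shiftOut_zero {S I O : Type*} (f : S → I → S) (φ : S × (ℕ → I) → O) :
    shiftOut f φ 0 = φ :=
  rfl

theorem shiftOut_succ_apply {S I O : Type*} (f : S → I → S) (φ : S × (ℕ → I) → O) (k : ℕ)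
    (p : S × (ℕ → I)) : shiftOut f φ (k + 1) p = shiftOut f φ k (sysShift f p) :=
  rfl

theorem exists_contDiffAt_factor_of_contDiffAt_state (h : X → Y) (x₀ : X) (u₀ : U)
    (hh : ContDiffAt ℝ (⊤ : ℕ∞) h x₀) :
    ∃ (q : ℕ) (ψ : X × (Fin (q + 1) → U) → Y),
      ContDiffAt ℝ (⊤ : ℕ∞) ψ (x₀, fun _ => u₀) ∧
        ∀ p : X × (ℕ → U), h p.1 = ψ (p.1, fun i => p.2 i) :=
  ⟨0, fun q => h q.1, hh.comp _ contDiffAt_fst, fun _ => rfl⟩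

namespace AcademicExample

abbrev State := Fin 5 → ℝ

abbrev Input := Fin 2 → ℝ

def sys (x : State) (u : Input) : State :=
  ![x 1 * (u 0 + 1), u 0, x 3 + u 1 - 1, x 4 + 1 - x 0 * (u 0 + 1) / (x 1 + 1), x 1 + u 1]

def stateOutput (x : State) : Input :=
  ![x 0 / (x 1 + 1), x 2 - x 4]

def output (p : State × (ℕ → Input)) : Input :=
  stateOutput p.1

def xEq : State := ![0, 0, 0, 1, 0]

def uEq : Input := ![0, 0]

theorem sys_xEq_uEq : sys xEq uEq = xEq := by
  ext i; fin_cases i <;> simp [sys, xEq, uEq]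

theorem contDiffAt_stateOutput : ContDiffAt ℝ (⊤ : ℕ∞) stateOutput xEq := by
  refine contDiffAt_pi.2 fun i => ?_
  fin_cases i
  · exact ContDiffAt.div (by fun_prop) (by fun_prop) (by simp [xEq])
  · simp [stateOutput]; fun_prop

theorem shiftOut_one (p : State × (ℕ → Input)) (hu : p.2 0 0 + 1 ≠ 0) :
    shiftOut sys output 1 p = ![p.1 1, p.1 3 - p.1 1 - 1] := by
  ext i; fin_cases i
  · simp [shiftOut, sysShift, sys, output, stateOutput, hu]
  · simp [shiftOut, sysShift, sys, output, stateOutput]; ring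

theorem shiftOut_two (p : State × (ℕ → Input)) (hu : p.2 1 0 + 1 ≠ 0) :
    shiftOut sys output 2 p =
      ![p.2 0 0, p.1 4 - p.1 0 * (p.2 0 0 + 1) / (p.1 1 + 1) - p.2 0 0] := by
  rw [shiftOut_succ_apply, shiftOut_one _ hu]
  ext i; fin_cases i
  · simp [sysShift, sys]
  · simp [sysShift, sys]; ring

theorem shiftOut_three (p : State × (ℕ → Input)) (hu₀ : p.2 0 0 + 1 ≠ 0)
    (hu₂ : p.2 2 0 + 1 ≠ 0) :
    shiftOut sys output 3 p = ![p.2 1 0, p.2 0 1 - (p.1 1 + 1) * p.2 1 0] := by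
  rw [shiftOut_succ_apply, shiftOut_two _ hu₂]
  ext i; fin_cases i
  · simp [sysShift, sys]
  · simp [sysShift, sys]; field_simp; ring

-- `y j` stands for the `j`-th forward shift `δʲy` of the flat output.
def stateOfShifts (y : Fin 3 → Input) : State :=
  let x₅ := y 2 1 + y 0 0 * (y 2 0 + 1) + y 2 0
  ![y 0 0 * (y 1 0 + 1), y 1 0, y 0 1 + x₅, y 1 1 + y 1 0 + 1, x₅]

def inputOfShifts (y : Fin 4 → Input) : Input :=
  ![y 2 0, y 3 1 + (y 1 0 + 1) * y 3 0]

theorem contDiff_stateOfShifts : ContDiff ℝ (⊤ : ℕ∞) stateOfShifts := by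
  refine contDiff_pi.2 fun i => ?_
  fin_cases i <;> simp [stateOfShifts] <;> fun_prop

theorem contDiff_inputOfShifts : ContDiff ℝ (⊤ : ℕ∞) inputOfShifts := by
  refine contDiff_pi.2 fun i => ?_
  fin_cases i <;> simp [inputOfShifts] <;> fun_prop

theorem stateOfShifts_shiftOut (p : State × (ℕ → Input)) (hx : p.1 1 + 1 ≠ 0)
    (hu₀ : p.2 0 0 + 1 ≠ 0) (hu₁ : p.2 1 0 + 1 ≠ 0) :
    stateOfShifts (fun j => shiftOut sys output j p) = p.1 := by
  have h₁ := shiftOut_one p hu₀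
  have h₂ := shiftOut_two p hu₁
  ext i; fin_cases i <;> simp [stateOfShifts, h₁, h₂, shiftOut_zero, output, stateOutput] <;>
    field_simp <;> ring

theorem inputOfShifts_shiftOut (p : State × (ℕ → Input)) (hu₀ : p.2 0 0 + 1 ≠ 0)
    (hu₁ : p.2 1 0 + 1 ≠ 0) (hu₂ : p.2 2 0 + 1 ≠ 0) :
    inputOfShifts (fun j => shiftOut sys output j p) = p.2 0 := by
  have h₁ := shiftOut_one p hu₀
  have h₂ := shiftOut_two p hu₁
  have h₃ := shiftOut_three p hu₀ hu₂
  ext i; fin_cases i <;> simp [inputOfShifts, h₁, h₂, h₃]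

theorem eventually_denominators_ne_zero :
    ∀ᶠ p in 𝓝 ((xEq, fun _ => uEq) : State × (ℕ → Input)),
      p.1 1 + 1 ≠ 0 ∧ p.2 0 0 + 1 ≠ 0 ∧ p.2 1 0 + 1 ≠ 0 ∧ p.2 2 0 + 1 ≠ 0 := by
  have hstate :
      ContinuousAt (fun p : State × (ℕ → Input) => p.1 1 + 1) (xEq, fun _ => uEq) := by
    fun_prop
  have hinput (k : ℕ) :
      ContinuousAt (fun p : State × (ℕ → Input) => p.2 k 0 + 1) (xEq, fun _ => uEq) := by
    fun_prop
  refine (hstate.eventually_ne ?_).and <| ((hinput 0).eventually_ne ?_).and <|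
    ((hinput 1).eventually_ne ?_).and ((hinput 2).eventually_ne ?_) <;> simp [xEq, uEq]

theorem isFlatOutput_output : IsFlatOutput sys xEq uEq output := by
  refine ⟨exists_contDiffAt_factor_of_contDiffAt_state stateOutput xEq uEq contDiffAt_stateOutput,
    3, stateOfShifts, inputOfShifts, contDiff_stateOfShifts.contDiffAt,
    contDiff_inputOfShifts.contDiffAt, ?_⟩
  filter_upwards [eventually_denominators_ne_zero] with p ⟨hx, hu₀, hu₁, hu₂⟩
  exact ⟨(stateOfShifts_shiftOut p hx hu₀ hu₁).symm, (inputOfShifts_shiftOut p hu₀ hu₁ hu₂).symm⟩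

end AcademicExample

/-- academic example, Section 6.1 of the paper: the discrete-time
system `x¹⁺ = x²(u¹+1)`, `x²⁺ = u¹`, `x³⁺ = x⁴ + u² − 1`,
`x⁴⁺ = x⁵ + 1 − x¹(u¹+1)/(x²+1)`, `x⁵⁺ = x² + u²` is forward-flat around the
equilibrium `x₀ = (0,0,0,1,0)`, `u₀ = (0,0)`, and a flat output is given by
`y = (x¹/(x²+1), x³ − x⁵)`. -/
theorem academic_example_forward_flat
    (f : (Fin 5 → ℝ) → (Fin 2 → ℝ) → (Fin 5 → ℝ))
    (hf : f = fun x u =>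
      ![x 1 * (u 0 + 1),
        u 0,
        x 3 + u 1 - 1,
        x 4 + 1 - x 0 * (u 0 + 1) / (x 1 + 1),
        x 1 + u 1])
    (x₀ : Fin 5 → ℝ) (hx₀ : x₀ = ![0, 0, 0, 1, 0])
    (u₀ : Fin 2 → ℝ) (hu₀ : u₀ = ![0, 0])
    (φ : (Fin 5 → ℝ) × (ℕ → Fin 2 → ℝ) → Fin 2 → ℝ)
    (hφ : φ = fun p => ![p.1 0 / (p.1 1 + 1), p.1 2 - p.1 4]) :
    -- `(x₀,u₀)` is an equilibrium
    f x₀ u₀ = x₀ ∧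
    -- `y = (x¹/(x²+1), x³ − x⁵)` is a flat output, so the system is forward-flat
    IsFlatOutput f x₀ u₀ φ ∧ IsForwardFlat f x₀ u₀ := by
  subst hf hx₀ hu₀ hφ
  exact ⟨AcademicExample.sys_xEq_uEq, AcademicExample.isFlatOutput_output,
    _, AcademicExample.isFlatOutput_output⟩
end
end

section
/- For any sampling time T_s > 0 and parameter ε, the Euler-discretized VTOL aircraft system x¹⁺ = x¹ + T_s x³, x²⁺ = x² + T_s x⁴, x³⁺ = x³ + T_s sin(x⁵)(ε(x⁶)² − u¹), x⁴⁺ = x⁴ + T_s cos(x⁵)(−ε(x⁶)² + u¹) − T_s, x⁵⁺ = x⁵ + T_s x⁶, x⁶⁺ = x⁶ + T_s u² is forward-flat around any equilibrium of the form x₀ = (x₀¹, x₀², 0, 0, 0, 0), u₀ = (1, 0), with flat output y = (x¹, x²). -/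
noncomputable section
open Function Filter Topology

variable {X U Y : Type*}

variable [NormedAddCommGroup X] [NormedSpace ℝ X] [NormedAddCommGroup U] [NormedSpace ℝ U]
  [NormedAddCommGroup Y] [NormedSpace ℝ Y]

/-! Two Euler steps turn the position `y = (x¹, x²)` into
`y_{k+2} - 2 y_{k+1} + y_k = Ts² v_k (-sin θ_k, cos θ_k) - (0, Ts²)`, where `θ = x⁵` is the
roll angle and `v = u¹ - ε (x⁶)²` the effective thrust. Near the equilibrium `θ ≈ 0` and
`v ≈ 1`, so `θ_k` is the `arctan` of a ratio of these second differences; the velocities,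
the roll rate and both inputs then follow by inverting the remaining Euler steps, which uses
`y` up to its fourth shift. The reconstruction is smooth at the equilibrium because there all
second differences vanish, and it is valid on a neighbourhood because the shifted states
depend continuously on `(x, u, u_[1], …)`. -/

section Shift

variable {α β : Type*} (f : α → β → α)

theorem sysShift_iterate_snd (p : α × (ℕ → β)) (k : ℕ) :
    ((sysShift f)^[k] p).2 = fun j => p.2 (j + k) := by
  induction k with
  | zero => rfl
  | succ k ih =>
    rw [iterate_succ_apply', sysShift, ih]
    funext j
    exact congrArg p.2 (by omega)

theorem sysShift_iterate_succ_fst (p : α × (ℕ → β)) (k : ℕ) :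
    ((sysShift f)^[k + 1] p).1 = f ((sysShift f)^[k] p).1 (p.2 k) := by
  rw [iterate_succ_apply', sysShift, sysShift_iterate_snd]
  simp only [zero_add]

variable {f}

theorem sysShift_const_of_eq {x₀ : α} {u₀ : β} (heq : f x₀ u₀ = x₀) :
    sysShift f (x₀, fun _ => u₀) = (x₀, fun _ => u₀) := by
  rw [sysShift, heq]

theorem shiftOut_const_of_eq {γ : Type*} (φ : α × (ℕ → β) → γ) {x₀ : α} {u₀ : β}
    (heq : f x₀ u₀ = x₀) (k : ℕ) :
    shiftOut f φ k (x₀, fun _ => u₀) = φ (x₀, fun _ => u₀) := by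
  rw [shiftOut, iterate_fixed (sysShift_const_of_eq heq)]

variable [TopologicalSpace α] [TopologicalSpace β]

theorem continuous_sysShift (hf : Continuous (uncurry f)) : Continuous (sysShift f) :=
  (hf.comp (continuous_fst.prodMk ((continuous_apply 0).comp continuous_snd))).prodMk
    (continuous_pi fun k => (continuous_apply (k + 1)).comp continuous_snd)

theorem eventually_sysShift_iterate_mem (hf : Continuous (uncurry f)) {x₀ : α} {u₀ : β}
    (heq : f x₀ u₀ = x₀) {s : Set (α × β)} (hs : s ∈ 𝓝 (x₀, u₀)) (k : ℕ) :
    ∀ᶠ p in 𝓝 ((x₀, fun _ => u₀) : α × (ℕ → β)), (((sysShift f)^[k] p).1, p.2 k) ∈ s := by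
  have hcont : Continuous fun p : α × (ℕ → β) => (((sysShift f)^[k] p).1, p.2 k) :=
    (continuous_fst.comp ((continuous_sysShift hf).iterate k)).prodMk
      ((continuous_apply k).comp continuous_snd)
  refine hcont.continuousAt.preimage_mem_nhds ?_
  simpa only [iterate_fixed (sysShift_const_of_eq heq)] using hs

end Shift

theorem isFlatOutput_of_equilibrium {f : X → U → X} {x₀ : X} {u₀ : U} {g : X → Y}
    (heq : f x₀ u₀ = x₀) (hg : ContDiffAt ℝ (⊤ : ℕ∞) g x₀) {R : ℕ}
    {Fx : (Fin R → Y) → X} {Fu : (Fin (R + 1) → Y) → U}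
    (hFx : ContDiffAt ℝ (⊤ : ℕ∞) Fx fun _ => g x₀) (hFu : ContDiffAt ℝ (⊤ : ℕ∞) Fu fun _ => g x₀)
    (hF : ∀ᶠ p in 𝓝 ((x₀, fun _ => u₀) : X × (ℕ → U)),
      p.1 = Fx (fun j => shiftOut f (fun p => g p.1) j p) ∧
      p.2 0 = Fu (fun j => shiftOut f (fun p => g p.1) j p)) :
    IsFlatOutput f x₀ u₀ (fun p => g p.1) := by
  have hconst : ∀ {N : ℕ}, (fun j : Fin N => shiftOut f (fun p => g p.1) j (x₀, fun _ => u₀)) =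
      fun _ => g x₀ := funext fun j => shiftOut_const_of_eq _ heq j
  exact ⟨⟨0, fun q => g q.1, hg.comp _ contDiffAt_fst, fun _ => rfl⟩,
    R, Fx, Fu, hconst ▸ hFx, hconst ▸ hFu, hF⟩

open Real Set

/-- Position `(x 0, x 1)`, velocity `(x 2, x 3)`, roll angle `x 4` and its rate `x 5`;
thrust `u 0` and roll acceleration `u 1`. -/
def vtol (Ts ε : ℝ) (x : Fin 6 → ℝ) (u : Fin 2 → ℝ) : Fin 6 → ℝ :=
  ![x 0 + Ts * x 2,
    x 1 + Ts * x 3,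
    x 2 + Ts * sin (x 4) * (ε * (x 5)^2 - u 0),
    x 3 + Ts * cos (x 4) * (-(ε * (x 5)^2) + u 0) - Ts,
    x 4 + Ts * x 5,
    x 5 + Ts * u 1]

theorem vtol_equilibrium (Ts ε a b : ℝ) :
    vtol Ts ε ![a, b, 0, 0, 0, 0] ![1, 0] = ![a, b, 0, 0, 0, 0] := by
  ext i
  fin_cases i <;> simp [vtol]

theorem continuous_uncurry_vtol (Ts ε : ℝ) : Continuous (uncurry (vtol Ts ε)) := by
  unfold vtol
  fun_prop

def vtolRoll (Ts : ℝ) (a b c : Fin 2 → ℝ) : ℝ :=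
  arctan (-(c 0 - 2 * b 0 + a 0) / (c 1 - 2 * b 1 + a 1 + Ts ^ 2))

theorem vtolRoll_eq {Ts θ v : ℝ} (hTs : Ts ≠ 0) (hθ : θ ∈ Ioo (-(π / 2)) (π / 2)) (hv : 0 < v)
    {a b c : Fin 2 → ℝ} (h0 : c 0 - 2 * b 0 + a 0 = -(Ts ^ 2 * (sin θ * v)))
    (h1 : c 1 - 2 * b 1 + a 1 + Ts ^ 2 = Ts ^ 2 * (cos θ * v)) :
    vtolRoll Ts a b c = θ := by
  have hc : Ts ^ 2 * v ≠ 0 := by positivity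
  rw [vtolRoll, h0, neg_neg, h1]
  convert arctan_tan hθ.1 hθ.2 using 2
  rw [tan_eq_sin_div_cos, ← mul_div_mul_left (sin θ) (cos θ) hc]
  ring

theorem vtolRoll_const (Ts : ℝ) (w : Fin 2 → ℝ) : vtolRoll Ts w w w = 0 := by
  rw [vtolRoll, show -(w 0 - 2 * w 0 + w 0) = 0 by ring, zero_div, arctan_zero]

theorem contDiffAt_vtolRoll {N : ℕ} {Ts : ℝ} (hTs : Ts ≠ 0) (i j k : Fin N) (w : Fin 2 → ℝ) :
    ContDiffAt ℝ (⊤ : ℕ∞) (fun z : Fin N → Fin 2 → ℝ => vtolRoll Ts (z i) (z j) (z k))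
      (fun _ => w) := by
  refine ContDiffAt.arctan (ContDiffAt.div (by fun_prop) (by fun_prop) ?_)
  rw [show w 1 - 2 * w 1 + w 1 + Ts ^ 2 = Ts ^ 2 by ring]
  exact pow_ne_zero 2 hTs

def vtolStateOfFlat (Ts : ℝ) (z : Fin 4 → Fin 2 → ℝ) : Fin 6 → ℝ :=
  ![z 0 0, z 0 1, (z 1 0 - z 0 0) / Ts, (z 1 1 - z 0 1) / Ts,
    vtolRoll Ts (z 0) (z 1) (z 2),
    (vtolRoll Ts (z 1) (z 2) (z 3) - vtolRoll Ts (z 0) (z 1) (z 2)) / Ts]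

def vtolInputOfFlat (Ts ε : ℝ) (z : Fin 5 → Fin 2 → ℝ) : Fin 2 → ℝ :=
  ![(z 2 1 - 2 * z 1 1 + z 0 1 + Ts ^ 2) / (Ts ^ 2 * cos (vtolRoll Ts (z 0) (z 1) (z 2)))
      + ε * ((vtolRoll Ts (z 1) (z 2) (z 3) - vtolRoll Ts (z 0) (z 1) (z 2)) / Ts) ^ 2,
    (vtolRoll Ts (z 2) (z 3) (z 4) - 2 * vtolRoll Ts (z 1) (z 2) (z 3)
      + vtolRoll Ts (z 0) (z 1) (z 2)) / Ts ^ 2]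

theorem contDiffAt_vtolStateOfFlat {Ts : ℝ} (hTs : Ts ≠ 0) (w : Fin 2 → ℝ) :
    ContDiffAt ℝ (⊤ : ℕ∞) (vtolStateOfFlat Ts) (fun _ => w) := by
  have h₀ := contDiffAt_vtolRoll hTs (0 : Fin 4) 1 2 w
  have h₁ := contDiffAt_vtolRoll hTs (1 : Fin 4) 2 3 w
  refine contDiffAt_pi.2 fun i => ?_
  fin_cases i <;> dsimp [vtolStateOfFlat] <;> fun_prop

theorem contDiffAt_vtolInputOfFlat {Ts : ℝ} (hTs : Ts ≠ 0) (ε : ℝ) (w : Fin 2 → ℝ) :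
    ContDiffAt ℝ (⊤ : ℕ∞) (vtolInputOfFlat Ts ε) (fun _ => w) := by
  have h₀ := contDiffAt_vtolRoll hTs (0 : Fin 5) 1 2 w
  have h₁ := contDiffAt_vtolRoll hTs (1 : Fin 5) 2 3 w
  have h₂ := contDiffAt_vtolRoll hTs (2 : Fin 5) 3 4 w
  refine contDiffAt_pi.2 fun i => ?_
  fin_cases i <;> dsimp [vtolInputOfFlat] <;> fun_prop (disch := simp [vtolRoll_const, hTs])

/-- Where `vtolRoll` recovers the roll angle. -/
def vtolRegular (ε : ℝ) : Set ((Fin 6 → ℝ) × (Fin 2 → ℝ)) :=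
  {q | q.1 4 ∈ Ioo (-(π / 2)) (π / 2) ∧ 0 < q.2 0 - ε * q.1 5 ^ 2}

theorem vtolRegular_mem_nhds (ε a b : ℝ) :
    vtolRegular ε ∈ 𝓝 ((![a, b, 0, 0, 0, 0], ![1, 0]) : (Fin 6 → ℝ) × (Fin 2 → ℝ)) := by
  refine IsOpen.mem_nhds ?_ ⟨by simp [pi_pos], by simp⟩
  exact (isOpen_Ioo.preimage (by fun_prop)).inter
    (isOpen_lt continuous_const (by fun_prop) :
      IsOpen {q : (Fin 6 → ℝ) × (Fin 2 → ℝ) | 0 < q.2 0 - ε * q.1 5 ^ 2})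

section Trajectory

variable {Ts ε : ℝ} {x : ℕ → Fin 6 → ℝ} {u : ℕ → Fin 2 → ℝ}

theorem vtol_secondDiff_zero (hx : ∀ k, x (k + 1) = vtol Ts ε (x k) (u k)) (k : ℕ) :
    x (k + 2) 0 - 2 * x (k + 1) 0 + x k 0 = -(Ts ^ 2 * (sin (x k 4) * (u k 0 - ε * x k 5 ^ 2))) := by
  rw [hx (k + 1), hx k]
  simp only [vtol, Matrix.cons_val]
  ring

theorem vtol_secondDiff_one (hx : ∀ k, x (k + 1) = vtol Ts ε (x k) (u k)) (k : ℕ) :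
    x (k + 2) 1 - 2 * x (k + 1) 1 + x k 1 + Ts ^ 2 =
      Ts ^ 2 * (cos (x k 4) * (u k 0 - ε * x k 5 ^ 2)) := by
  rw [hx (k + 1), hx k]
  simp only [vtol, Matrix.cons_val]
  ring

theorem vtolRoll_trajectory (hTs : Ts ≠ 0) (hx : ∀ k, x (k + 1) = vtol Ts ε (x k) (u k))
    (k : ℕ) (hk : (x k, u k) ∈ vtolRegular ε) :
    vtolRoll Ts ![x k 0, x k 1] ![x (k + 1) 0, x (k + 1) 1] ![x (k + 2) 0, x (k + 2) 1] = x k 4 :=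
  vtolRoll_eq hTs hk.1 hk.2 (vtol_secondDiff_zero hx k) (vtol_secondDiff_one hx k)

theorem vtolStateOfFlat_trajectory (hTs : Ts ≠ 0) (hx : ∀ k, x (k + 1) = vtol Ts ε (x k) (u k))
    (hreg : ∀ k < 2, (x k, u k) ∈ vtolRegular ε) :
    vtolStateOfFlat Ts (fun j => ![x j 0, x j 1]) = x 0 := by
  have h₀ := vtolRoll_trajectory hTs hx 0 (hreg 0 (by norm_num))
  have h₁ := vtolRoll_trajectory hTs hx 1 (hreg 1 (by norm_num))
  have hx₁ : x 1 = vtol Ts ε (x 0) (u 0) := hx 0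
  change ![x 0 0, x 0 1, (x 1 0 - x 0 0) / Ts, (x 1 1 - x 0 1) / Ts,
    vtolRoll Ts ![x 0 0, x 0 1] ![x 1 0, x 1 1] ![x 2 0, x 2 1],
    (vtolRoll Ts ![x 1 0, x 1 1] ![x 2 0, x 2 1] ![x 3 0, x 3 1]
      - vtolRoll Ts ![x 0 0, x 0 1] ![x 1 0, x 1 1] ![x 2 0, x 2 1]) / Ts] = x 0
  rw [h₀, h₁, hx₁]
  ext i
  fin_cases i <;> simp [vtol, hTs]

theorem vtolInputOfFlat_trajectory (hTs : Ts ≠ 0) (hx : ∀ k, x (k + 1) = vtol Ts ε (x k) (u k))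
    (hreg : ∀ k < 3, (x k, u k) ∈ vtolRegular ε) :
    vtolInputOfFlat Ts ε (fun j => ![x j 0, x j 1]) = u 0 := by
  have h₀ := vtolRoll_trajectory hTs hx 0 (hreg 0 (by norm_num))
  have h₁ := vtolRoll_trajectory hTs hx 1 (hreg 1 (by norm_num))
  have h₂ := vtolRoll_trajectory hTs hx 2 (hreg 2 (by norm_num))
  have hy := vtol_secondDiff_one hx 0
  have hcos : cos (x 0 4) ≠ 0 := (cos_pos_of_mem_Ioo (hreg 0 (by norm_num)).1).ne'
  have hθ (k : ℕ) : x (k + 1) 4 = x k 4 + Ts * x k 5 := by rw [hx k]; simp [vtol]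
  have hω : x 1 5 = x 0 5 + Ts * u 0 1 := by rw [hx 0]; simp [vtol]
  change ![(x 2 1 - 2 * x 1 1 + x 0 1 + Ts ^ 2)
        / (Ts ^ 2 * cos (vtolRoll Ts ![x 0 0, x 0 1] ![x 1 0, x 1 1] ![x 2 0, x 2 1]))
      + ε * ((vtolRoll Ts ![x 1 0, x 1 1] ![x 2 0, x 2 1] ![x 3 0, x 3 1]
        - vtolRoll Ts ![x 0 0, x 0 1] ![x 1 0, x 1 1] ![x 2 0, x 2 1]) / Ts) ^ 2,
    (vtolRoll Ts ![x 2 0, x 2 1] ![x 3 0, x 3 1] ![x 4 0, x 4 1]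
      - 2 * vtolRoll Ts ![x 1 0, x 1 1] ![x 2 0, x 2 1] ![x 3 0, x 3 1]
      + vtolRoll Ts ![x 0 0, x 0 1] ![x 1 0, x 1 1] ![x 2 0, x 2 1]) / Ts ^ 2] = u 0
  rw [h₀, h₁, h₂, hy, hθ 1, hθ 0, hω]
  refine funext (Fin.forall_fin_two.2 ⟨?_, ?_⟩) <;>
  · simp only [Matrix.cons_val_zero, Matrix.cons_val_one]
    field_simp
    ring

end Trajectory

theorem vtol_isFlatOutput {Ts : ℝ} (hTs : Ts ≠ 0) (ε a b : ℝ) :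
    IsFlatOutput (vtol Ts ε) ![a, b, 0, 0, 0, 0] ![1, 0] (fun p => ![p.1 0, p.1 1]) := by
  have heq := vtol_equilibrium Ts ε a b
  refine isFlatOutput_of_equilibrium (g := fun x : Fin 6 → ℝ => ![x 0, x 1]) heq
    (contDiffAt_pi.2 fun i => by fin_cases i <;> dsimp <;> fun_prop)
    (contDiffAt_vtolStateOfFlat hTs _) (contDiffAt_vtolInputOfFlat hTs ε _) ?_
  have hreg := (finite_Iio 3).eventually_all.2 fun k _ =>
    eventually_sysShift_iterate_mem (continuous_uncurry_vtol Ts ε) heq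
      (vtolRegular_mem_nhds ε a b) k
  filter_upwards [hreg] with p hp
  have hx := sysShift_iterate_succ_fst (vtol Ts ε) p
  exact ⟨(vtolStateOfFlat_trajectory hTs hx fun k hk => hp k (hk.trans (by norm_num))).symm,
    (vtolInputOfFlat_trajectory hTs hx hp).symm⟩

/-- VTOL aircraft example, Section 6.2 of the paper: for any sampling
time `T_s > 0` and parameter `ε`, the Euler-discretized VTOL aircraft system
`x¹⁺ = x¹ + T_s x³`, `x²⁺ = x² + T_s x⁴`, `x³⁺ = x³ + T_s sin(x⁵)(ε(x⁶)² − u¹)`,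
`x⁴⁺ = x⁴ + T_s cos(x⁵)(−ε(x⁶)² + u¹) − T_s`, `x⁵⁺ = x⁵ + T_s x⁶`, `x⁶⁺ = x⁶ + T_s u²`
is forward-flat around any equilibrium `x₀ = (x₀¹, x₀², 0, 0, 0, 0)`, `u₀ = (1, 0)`,
with flat output `y = (x¹, x²)`. -/
theorem vtol_example_forward_flat
    (Ts ε : ℝ) (hTs : 0 < Ts)
    (f : (Fin 6 → ℝ) → (Fin 2 → ℝ) → (Fin 6 → ℝ))
    (hf : f = fun x u =>
      ![x 0 + Ts * x 2,
        x 1 + Ts * x 3,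
        x 2 + Ts * Real.sin (x 4) * (ε * (x 5)^2 - u 0),
        x 3 + Ts * Real.cos (x 4) * (-(ε * (x 5)^2) + u 0) - Ts,
        x 4 + Ts * x 5,
        x 5 + Ts * u 1])
    (xa₀ xb₀ : ℝ)
    (x₀ : Fin 6 → ℝ) (hx₀ : x₀ = ![xa₀, xb₀, 0, 0, 0, 0])
    (u₀ : Fin 2 → ℝ) (hu₀ : u₀ = ![1, 0])
    (φ : (Fin 6 → ℝ) × (ℕ → Fin 2 → ℝ) → Fin 2 → ℝ)
    (hφ : φ = fun p => ![p.1 0, p.1 1]) :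
    -- `(x₀,u₀)` is an equilibrium
    f x₀ u₀ = x₀ ∧
    -- `y = (x¹, x²)` is a flat output, so the system is forward-flat
    IsFlatOutput f x₀ u₀ φ ∧ IsForwardFlat f x₀ u₀ := by
  obtain rfl : f = vtol Ts ε := hf
  subst hx₀ hu₀ hφ
  have hflat := vtol_isFlatOutput hTs.ne' ε xa₀ xb₀
  exact ⟨vtol_equilibrium Ts ε xa₀ xb₀, hflat, _, hflat⟩
end
end
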